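/- arXiv:math/0603418 — 3 statements merged into one kernel-verified Lean document; each statement's English description precedes it below -/
import Mathlib

section
/- Let λ, A, D ∈ ℂ with A ≠ 0, |λ| > 1, x := λ + λ^{-1} satisfying 0 < |x| < 0.5 and x ∉ ℝ, AD = x²/(x²-4), and 1 ≤ |D/A| ≤ |λ|. Then either |A + D| < |x| or |Aλ + Dλ^{-1}| < |x|. -/
/-! Suppose both traces had modulus at least `‖x‖`; then the sum of their squares is at least
`2‖x‖²`. Expanding, the two cross terms combine into `Re (A D̄ (1 + λ / λ̄))`, and
`‖1 + λ / λ̄‖ ≤ ‖x‖`. The ratio bound `‖A‖ ≤ ‖D‖ ≤ ‖λ‖ ‖A‖` bounds the remaining terms by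
`‖A‖‖D‖ (1 + ‖λ‖)(‖λ‖ + ‖λ‖⁻¹)`, while `AD = x² / (λ - λ⁻¹)²` makes `2‖x‖² = 2‖A‖‖D‖‖λ - λ⁻¹‖²`.
As `‖λ‖ - ‖λ‖⁻¹ ≤ ‖x‖ < 1/2`, `λ` is close to the unit circle, `‖λ - λ⁻¹‖²` is close to `4` and
the coefficient `(1 + ‖λ‖)(‖λ‖ + ‖λ‖⁻¹) + 2‖x‖` stays well below `8`, a contradiction. -/

open Complex ComplexConjugate

theorem sq_norm_add_inv_eq (z : ℂ) (hz : z ≠ 0) :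
    ‖z + z⁻¹‖ ^ 2 = ‖1 + z * conj z⁻¹‖ ^ 2 + (‖z‖ - ‖z‖⁻¹) ^ 2 := by
  have hr : ‖z‖ ≠ 0 := norm_ne_zero_iff.mpr hz
  have hre : (1 * conj (z * conj z⁻¹)).re = (z * conj z⁻¹).re := by rw [one_mul, conj_re]
  rw [Complex.sq_norm, Complex.sq_norm, normSq_add, normSq_add, hre, normSq_one, normSq_mul,
    normSq_conj, normSq_inv, ← Complex.sq_norm]
  field_simp
  ring

theorem norm_one_add_mul_conj_inv_le (z : ℂ) (hz : z ≠ 0) :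
    ‖1 + z * conj z⁻¹‖ ≤ ‖z + z⁻¹‖ :=
  le_of_pow_le_pow_left₀ two_ne_zero (norm_nonneg _) <| by
    rw [sq_norm_add_inv_eq z hz]
    exact le_add_of_nonneg_right (sq_nonneg _)

theorem add_inv_sq_sub_four {K : Type*} [Field K] (z : K) (hz : z ≠ 0) :
    (z + z⁻¹) ^ 2 - 4 = (z - z⁻¹) ^ 2 := by
  field_simp
  ring

theorem sq_norm_sub_inv (z : ℂ) :
    ‖z - z⁻¹‖ ^ 2 = 2 * (‖z‖ ^ 2 + ‖z‖⁻¹ ^ 2) - ‖z + z⁻¹‖ ^ 2 := by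
  rw [← norm_inv, ← parallelogram_law_with_norm ℝ]
  ring

theorem sq_norm_add_add_sq_norm_mul_add_mul_inv_le (A D z : ℂ) (hz : z ≠ 0) :
    ‖A + D‖ ^ 2 + ‖A * z + D * z⁻¹‖ ^ 2 ≤
      ‖A‖ ^ 2 * (1 + ‖z‖ ^ 2) + ‖D‖ ^ 2 * (1 + ‖z‖⁻¹ ^ 2) + 2 * (‖A‖ * ‖D‖ * ‖z + z⁻¹‖) := by
  have hcross : (A * conj D).re + (A * z * conj (D * z⁻¹)).re =
      (A * conj D * (1 + z * conj z⁻¹)).re := by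
    rw [← add_re, map_mul]
    ring_nf
  have hbound : (A * conj D * (1 + z * conj z⁻¹)).re ≤ ‖A‖ * ‖D‖ * ‖z + z⁻¹‖ :=
    calc (A * conj D * (1 + z * conj z⁻¹)).re
        ≤ ‖A * conj D * (1 + z * conj z⁻¹)‖ := re_le_norm _
      _ = ‖A‖ * ‖D‖ * ‖1 + z * conj z⁻¹‖ := by rw [norm_mul, norm_mul, norm_conj]
      _ ≤ ‖A‖ * ‖D‖ * ‖z + z⁻¹‖ := by gcongr; exact norm_one_add_mul_conj_inv_le z hz
  simp only [Complex.sq_norm, normSq_add, normSq_mul, normSq_inv] at hcross ⊢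
  simp only [← Complex.sq_norm, inv_pow] at hcross ⊢
  linarith

theorem sq_mul_one_add_sq_add_sq_mul_one_add_inv_sq_le {a d r : ℝ} (ha : 0 ≤ a) (had : a ≤ d)
    (hdr : d ≤ r * a) (hr : 0 < r) :
    a ^ 2 * (1 + r ^ 2) + d ^ 2 * (1 + r⁻¹ ^ 2) ≤ a * d * ((1 + r) * (r + r⁻¹)) := by
  have ha2 : a ^ 2 ≤ a * d := by nlinarith
  have hd2 : d ^ 2 ≤ r * (a * d) := by nlinarith
  calc a ^ 2 * (1 + r ^ 2) + d ^ 2 * (1 + r⁻¹ ^ 2)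
      ≤ a * d * (1 + r ^ 2) + r * (a * d) * (1 + r⁻¹ ^ 2) := by gcongr
    _ = a * d * ((1 + r) * (r + r⁻¹)) := by field_simp; ring

theorem one_add_mul_add_inv_add_two_mul_lt {r X : ℝ} (hr : 1 < r) (hX : X < 1 / 2)
    (hrX : r - r⁻¹ ≤ X) :
    (1 + r) * (r + r⁻¹) + 2 * X < 2 * (2 * (r ^ 2 + r⁻¹ ^ 2) - X ^ 2) := by
  have hs : r * r⁻¹ = 1 := mul_inv_cancel₀ (by positivity)
  have hs1 : r⁻¹ < 1 := inv_lt_one_of_one_lt₀ hr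
  nlinarith [sq_nonneg (r - r⁻¹)]

theorem stmt_10_general (lam A D : ℂ) (hA : A ≠ 0) (hlam : ‖lam‖ > 1)
    (x : ℂ) (hx : x = lam + lam⁻¹)
    (h1 : ‖x‖ < 0.5)
    (hAD : A * D = x ^ 2 / (x ^ 2 - 4))
    (hr1 : 1 ≤ ‖D / A‖) (hr2 : ‖D / A‖ ≤ ‖lam‖) :
    ‖A + D‖ < ‖x‖ ∨
      ‖A * lam + D * lam⁻¹‖ < ‖x‖ := by
  have hlam0 : lam ≠ 0 := norm_pos_iff.mp (by linarith)
  have ha : 0 < ‖A‖ := norm_pos_iff.mpr hA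
  rw [norm_div, le_div_iff₀ ha, one_mul] at hr1
  rw [norm_div, div_le_iff₀ ha] at hr2
  have hrx : ‖lam‖ - ‖lam‖⁻¹ ≤ ‖x‖ := by
    rw [hx, ← norm_inv]
    exact norm_sub_le_norm_add _ _
  have hcoef : (1 + ‖lam‖) * (‖lam‖ + ‖lam‖⁻¹) + 2 * ‖x‖ < 2 * ‖lam - lam⁻¹‖ ^ 2 := by
    rw [sq_norm_sub_inv, ← hx]
    exact one_add_mul_add_inv_add_two_mul_lt hlam (by linarith) hrx
  have hL : 0 < ‖lam - lam⁻¹‖ ^ 2 := by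
    have : 0 ≤ (1 + ‖lam‖) * (‖lam‖ + ‖lam‖⁻¹) + 2 * ‖x‖ := by positivity
    linarith
  have hadL : ‖A‖ * ‖D‖ * ‖lam - lam⁻¹‖ ^ 2 = ‖x‖ ^ 2 := by
    rw [← norm_mul, hAD, hx, add_inv_sq_sub_four lam hlam0, norm_div, norm_pow, norm_pow,
      div_mul_cancel₀ _ hL.ne']
  have hsum : ‖A + D‖ ^ 2 + ‖A * lam + D * lam⁻¹‖ ^ 2 < 2 * ‖x‖ ^ 2 :=
    calc ‖A + D‖ ^ 2 + ‖A * lam + D * lam⁻¹‖ ^ 2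
        ≤ ‖A‖ ^ 2 * (1 + ‖lam‖ ^ 2) + ‖D‖ ^ 2 * (1 + ‖lam‖⁻¹ ^ 2) + 2 * (‖A‖ * ‖D‖ * ‖x‖) := by
          rw [hx]; exact sq_norm_add_add_sq_norm_mul_add_mul_inv_le A D lam hlam0
      _ ≤ ‖A‖ * ‖D‖ * ((1 + ‖lam‖) * (‖lam‖ + ‖lam‖⁻¹) + 2 * ‖x‖) := by
          have := sq_mul_one_add_sq_add_sq_mul_one_add_inv_sq_le ha.le hr1 hr2 (by linarith)
          linarith
      _ < ‖A‖ * ‖D‖ * (2 * ‖lam - lam⁻¹‖ ^ 2) := by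
          gcongr
          exact mul_pos ha (ha.trans_le hr1)
      _ = 2 * ‖x‖ ^ 2 := by rw [← hadL]; ring
  by_contra! hge
  linarith [pow_le_pow_left₀ (norm_nonneg x) hge.1 2, pow_le_pow_left₀ (norm_nonneg x) hge.2 2]

theorem stmt_10 (lam A D : ℂ) (hA : A ≠ 0) (hlam : ‖lam‖ > 1)
    (x : ℂ) (hx : x = lam + lam⁻¹)
    (h0 : 0 < ‖x‖) (h1 : ‖x‖ < 0.5)
    (hxR : x.im ≠ 0)
    (hAD : A * D = x ^ 2 / (x ^ 2 - 4))
    (hr1 : 1 ≤ ‖D / A‖) (hr2 : ‖D / A‖ ≤ ‖lam‖) :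
    ‖A + D‖ < ‖x‖ ∨
      ‖A * lam + D * lam⁻¹‖ < ‖x‖ :=
  stmt_10_general lam A D hA hlam x hx h1 hAD hr1 hr2
end

section
/- Let λ ∈ ℂ with |λ| > 1 and x = λ + λ^{-1} with |x| < 0.5. Let A, D ∈ ℂ with AD = x²/(x²-4), A ≠ 0, and 1 ≤ |D/A| ≤ |λ|. If |1 + D/A| ≥ √3.75, then |λ + D/(Aλ)| < √3.75. -/
/-!
Write `r = D / A`. Since `λ + r / λ = x + (r - 1) / λ`, it suffices to bound `‖r - 1‖`.
By the parallelogram law `‖r - 1‖² = 2 + 2‖r‖² - ‖1 + r‖²`, so a large `‖1 + r‖` forces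
`‖r - 1‖ < √2 ‖r‖ ≤ √2 ‖λ‖`, whence `‖λ + r / λ‖ < ‖x‖ + √2 < 0.5 + √2 < √3.75`.
-/

lemma Complex.norm_sub_one_lt_sqrt_two_mul_norm {r : ℂ} (h : 2 < ‖1 + r‖ ^ 2) :
    ‖r - 1‖ < √2 * ‖r‖ := by
  have hpar := parallelogram_law_with_norm ℝ r 1
  rw [norm_one, add_comm r] at hpar
  have hsq : ‖r - 1‖ ^ 2 < (√2 * ‖r‖) ^ 2 := by
    rw [mul_pow, Real.sq_sqrt zero_le_two]
    linarith
  exact lt_of_pow_lt_pow_left₀ 2 (by positivity) hsq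

lemma add_div_eq_add_inv_add_sub_one_div {K : Type*} [Field K] {lam : K} (hlam : lam ≠ 0)
    (r : K) : lam + r / lam = lam + lam⁻¹ + (r - 1) / lam := by
  field_simp
  ring

lemma sqrt_two_add_half_lt_sqrt : √2 + 0.5 < √3.75 := by
  have h2 : √2 ^ 2 = 2 := Real.sq_sqrt zero_le_two
  have h2lt : √2 < 1.5 := by nlinarith [Real.sqrt_nonneg 2]
  rw [Real.lt_sqrt (by positivity)]
  nlinarith

theorem stmt_14_general (lam A D : ℂ) (hlam : ‖lam‖ > 1)
    (x : ℂ) (hx : x = lam + lam⁻¹) (h1 : ‖x‖ < 0.5)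
    (hr2 : ‖D / A‖ ≤ ‖lam‖)
    (hbig : Real.sqrt 3.75 ≤ ‖1 + D / A‖) :
    ‖lam + D / (A * lam)‖ < Real.sqrt 3.75 := by
  have hlam_pos : 0 < ‖lam‖ := one_pos.trans hlam
  have hbig_sq : 2 < ‖1 + D / A‖ ^ 2 := by
    have := pow_le_pow_left₀ (Real.sqrt_nonneg _) hbig 2
    rw [Real.sq_sqrt (by norm_num)] at this
    linarith
  have hsub : ‖D / A - 1‖ < √2 * ‖lam‖ :=
    (Complex.norm_sub_one_lt_sqrt_two_mul_norm hbig_sq).trans_le (by gcongr)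
  calc ‖lam + D / (A * lam)‖ = ‖x + (D / A - 1) / lam‖ := by
        rw [← div_div, add_div_eq_add_inv_add_sub_one_div (norm_pos_iff.mp hlam_pos), hx]
    _ ≤ ‖x‖ + ‖D / A - 1‖ / ‖lam‖ := (norm_add_le _ _).trans_eq (by rw [norm_div])
    _ < 0.5 + √2 := add_lt_add h1 ((div_lt_iff₀ hlam_pos).mpr hsub)
    _ < √3.75 := by linarith [sqrt_two_add_half_lt_sqrt]

theorem stmt_14 (lam A D : ℂ) (hA : A ≠ 0) (hlam : ‖lam‖ > 1)
    (x : ℂ) (hx : x = lam + lam⁻¹) (h1 : ‖x‖ < 0.5)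
    (hAD : A * D = x ^ 2 / (x ^ 2 - 4))
    (hr1 : 1 ≤ ‖D / A‖) (hr2 : ‖D / A‖ ≤ ‖lam‖)
    (hbig : Real.sqrt 3.75 ≤ ‖1 + D / A‖) :
    ‖lam + D / (A * lam)‖ < Real.sqrt 3.75 :=
  stmt_14_general lam A D hlam x hx h1 hr2 hbig
end

section
/- Let ρ: F₂ → SL(2,ℂ) be a representation of the free group on generators X, Y with tr ρ(XYX⁻¹Y⁻¹) = -2, where ρ(X) = diag(λ, λ⁻¹) and ρ(Y) = [[A,B],[C,D]]. Then AD = x²/(x²-4), where x = λ + λ⁻¹ = tr ρ(X). -/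
/-!
Conjugating `N = !![A, B; C, D]` by `M = diag(λ, λ⁻¹)` scales `B` by `λ²` and `C` by `λ⁻²`, so
`tr (M N M⁻¹ N⁻¹) = 2AD - (λ² + λ⁻²)BC`. Eliminating `BC = AD - 1` and writing `x = λ + λ⁻¹` gives
`tr [M, N] = (x² - 2) - (x² - 4)AD`, and `x² - 4 = (λ - λ⁻¹)²` is nonzero because `λ² ≠ 1`.
-/

namespace Matrix

variable {K : Type*} [Field K]

theorem inv_fin_two_of_det_eq_one {a b c d : K} (h : det !![a, b; c, d] = 1) :
    (!![a, b; c, d])⁻¹ = !![d, -b; -c, a] := by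
  rw [inv_def, h, Ring.inverse_one, one_smul, adjugate_fin_two_of]

theorem trace_diag_commutator {l a b c d : K} (hl : l ≠ 0) (hN : det !![a, b; c, d] = 1) :
    trace (!![l, 0; 0, l⁻¹] * !![a, b; c, d] * (!![l, 0; 0, l⁻¹])⁻¹ * (!![a, b; c, d])⁻¹) =
      (l + l⁻¹) ^ 2 - 2 - ((l + l⁻¹) ^ 2 - 4) * (a * d) := by
  have hM : det !![l, 0; 0, l⁻¹] = 1 := by simp [det_fin_two_of, hl]
  have hbc : b * c = a * d - 1 := by rw [det_fin_two_of] at hN; linear_combination -hN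
  rw [inv_fin_two_of_det_eq_one hM, inv_fin_two_of_det_eq_one hN]
  simp only [mul_fin_two, trace_fin_two_of]
  linear_combination (-(l ^ 2) - l⁻¹ ^ 2) * hbc + (4 * a * d - 2) * mul_inv_cancel₀ hl

end Matrix

theorem add_inv_sq_sub_four_ne_zero {K : Type*} [Field K] {l : K} (hl : l ≠ 0) (hl2 : l ^ 2 ≠ 1) :
    (l + l⁻¹) ^ 2 - 4 ≠ 0 := by
  have hsq : (l + l⁻¹) ^ 2 - 4 = (l - l⁻¹) ^ 2 := by
    linear_combination (4 : K) * mul_inv_cancel₀ hl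
  rw [hsq]
  refine pow_ne_zero 2 fun h => hl2 ?_
  have : l ^ 2 - 1 = l * (l - l⁻¹) := by linear_combination mul_inv_cancel₀ hl
  rw [← sub_eq_zero, this, h, mul_zero]

theorem stmt_15 (lam A B C D : ℂ) (hlam : lam ≠ 0) (hlam2 : lam ^ 2 ≠ 1)
    (M N : Matrix (Fin 2) (Fin 2) ℂ)
    (hM : M = !![lam, 0; 0, lam⁻¹]) (hN : N = !![A, B; C, D])
    (hdet : N.det = 1)
    (hcomm : (M * N * M⁻¹ * N⁻¹).trace = -2) :
    A * D = (lam + lam⁻¹) ^ 2 / ((lam + lam⁻¹) ^ 2 - 4) := by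
  subst hM hN
  rw [Matrix.trace_diag_commutator hlam hdet] at hcomm
  rw [eq_div_iff (add_inv_sq_sub_four_ne_zero hlam hlam2)]
  linear_combination -hcomm
end
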